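/- arXiv:1201.2467 — 2 statements merged into one kernel-verified Lean document; each statement's English description precedes it below -/
import Mathlib

section
/- For any m > 2, a strategy p is evolutionarily stable against two mutations if and only if it is evolutionarily stable against m mutations. -/
open Finset Set

noncomputable section

/-- The probability simplex in ℝᵏ. -/
def Δ' (k : ℕ) : Set (Fin k → ℝ) := stdSimplex ℝ (Fin k)

/-- Affine payoff determined by the matrix `U`. -/
def payoff {k : ℕ} (U : Fin k → Fin k → ℝ) (p q : Fin k → ℝ) : ℝ :=
  ∑ i, ∑ j, p i * q j * U i j

/-- The pure strategy `eⁱ`. -/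
def pure' {k : ℕ} (i : Fin k) : Fin k → ℝ := fun j => if j = i then 1 else 0

/-- Population state when mutations `r i` appear in proportions `ε i` against incumbent `p`. -/
def mix {k m : ℕ} (p : Fin k → ℝ) (r : Fin m → Fin k → ℝ) (ε : Fin m → ℝ) : Fin k → ℝ :=
  fun j => (∑ i, ε i * r i j) + (1 - ∑ i, ε i) * p j

/-- Evolutionarily stable strategy (ESS). -/
def IsESS {k : ℕ} (U : Fin k → Fin k → ℝ) (p : Fin k → ℝ) : Prop :=
  p ∈ Δ' k ∧ ∀ r ∈ Δ' k, r ≠ p → ∃ e ∈ Set.Ioo (0:ℝ) 1, ∀ ε : ℝ, 0 < ε → ε ≤ e →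
    payoff U p (fun j => ε * r j + (1 - ε) * p j) >
      payoff U r (fun j => ε * r j + (1 - ε) * p j)

/-- Evolutionary stability against `m` mutations. -/
def StableAgainst {k : ℕ} (U : Fin k → Fin k → ℝ) (m : ℕ) (p : Fin k → ℝ) : Prop :=
  ∀ r : Fin m → Fin k → ℝ, (∀ i, r i ∈ Δ' k) → (∀ i, r i ≠ p) →
    ∃ e ∈ Set.Ioo (0:ℝ) 1, ∀ ε : Fin m → ℝ, (∀ i, ε i ∈ Set.Ioc (0:ℝ) e) →
      ∀ i, payoff U p (mix p r ε) > payoff U (r i) (mix p r ε)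

/-- `e` is a uniform invasion barrier for `p` against `m` mutations. -/
def UniformBarrier {k : ℕ} (U : Fin k → Fin k → ℝ) (m : ℕ) (p : Fin k → ℝ) (e : ℝ) : Prop :=
  ∀ r : Fin m → Fin k → ℝ, (∀ i, r i ∈ Δ' k) → (∀ i, r i ≠ p) →
    ∀ ε : Fin m → ℝ, (∀ i, ε i ∈ Set.Ioc (0:ℝ) e) →
      ∀ i, payoff U p (mix p r ε) > payoff U (r i) (mix p r ε)

/-- Best responses to `p`. -/
def BR {k : ℕ} (U : Fin k → Fin k → ℝ) (p : Fin k → ℝ) : Set (Fin k → ℝ) :=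
  {q ∈ Δ' k | ∀ r ∈ Δ' k, payoff U r p ≤ payoff U q p}

/-- Local dominance. -/
def LocallyDominant {k : ℕ} (U : Fin k → Fin k → ℝ) (p : Fin k → ℝ) : Prop :=
  ∃ V ∈ nhdsWithin p (Δ' k), V ⊆ Δ' k ∧ ∀ s ∈ V, s ≠ p → ∀ r ∈ V, r ≠ p →
    payoff U p r ≥ payoff U s r ∧ payoff U p r > payoff U r r

/-- Strict local dominance. -/
def StrictlyLocallyDominant {k : ℕ} (U : Fin k → Fin k → ℝ) (p : Fin k → ℝ) : Prop :=
  ∃ V ∈ nhdsWithin p (Δ' k), V ⊆ Δ' k ∧ ∀ s ∈ V, s ≠ p → ∀ r ∈ V, r ≠ p →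
    payoff U p r > payoff U s r

/-! Instability against `m` mutations is detected by at most two of them. Comparing a single
mutant `r` with `p` along `εr + (1-ε)p` gives the classical conditions: `r` earns at most `p`'s
payoff against `p`, and when it earns as much, `p` does strictly better against `r`. Letting the
share of a first mutant `r` tend to zero next to a second mutant `q` shows moreover that every
alternative best reply `r` to `p` is weakly dominated by `p`. Conversely, under these conditions
`p` earns more than each mutant in a population `Σ εᵢrⁱ + (1 - Σ εᵢ)p` with all `εᵢ` small: the
payoff difference is affine in the `εᵢ`, with a nonnegative constant term, which vanishes only
when every summand is nonnegative and the mutant's own summand positive. -/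

open Filter Topology

lemma payoff_mix {k m : ℕ} (U : Fin k → Fin k → ℝ) (x p : Fin k → ℝ)
    (r : Fin m → Fin k → ℝ) (ε : Fin m → ℝ) :
    payoff U x (mix p r ε) =
      (∑ i, ε i * payoff U x (r i)) + (1 - ∑ i, ε i) * payoff U x p := by
  have payoff_eq (q : Fin k → ℝ) : payoff U x q = dotProduct x ((Matrix.of U).mulVec q) := by
    simp only [payoff, dotProduct, Matrix.mulVec, Matrix.of_apply, Finset.mul_sum]
    exact Finset.sum_congr rfl fun _ _ => Finset.sum_congr rfl fun _ _ => by ring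
  have mix_eq : mix p r ε = (∑ i, ε i • r i) + (1 - ∑ i, ε i) • p := by
    funext j
    simp [mix, Finset.sum_apply]
  simp [payoff_eq, mix_eq, Matrix.mulVec_add, Matrix.mulVec_sum, Matrix.mulVec_smul,
    dotProduct_add, dotProduct_sum]

lemma payoff_sub_payoff_mix {k m : ℕ} (U : Fin k → Fin k → ℝ) (x p : Fin k → ℝ)
    (r : Fin m → Fin k → ℝ) (ε : Fin m → ℝ) :
    payoff U p (mix p r ε) - payoff U x (mix p r ε) =
      (∑ i, ε i * (payoff U p (r i) - payoff U x (r i))) +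
        (1 - ∑ i, ε i) * (payoff U p p - payoff U x p) := by
  simp only [payoff_mix, mul_sub, Finset.sum_sub_distrib]
  ring

lemma nonneg_of_forall_Ioc_pos_add_mul {a b e : ℝ} (he : 0 < e)
    (h : ∀ t ∈ Set.Ioc 0 e, 0 < a + t * b) : 0 ≤ a := by
  have hlim : Tendsto (fun t => a + t * b) (𝓝[>] 0) (𝓝 a) := by
    have : Tendsto (fun t => a + t * b) (𝓝 0) (𝓝 (a + 0 * b)) :=
      ((tendsto_id (x := 𝓝 (0 : ℝ))).mul_const b).const_add a
    simpa using this.mono_left nhdsWithin_le_nhds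
  refine ge_of_tendsto hlim ?_
  filter_upwards [Ioc_mem_nhdsGT he] with t ht using (h t ht).le

lemma mix_cons_self_half {k n : ℕ} (p : Fin k → ℝ) (r : Fin (n + 1) → Fin k → ℝ)
    (ε : Fin (n + 1) → ℝ) :
    mix p (Fin.cons (r 0) r) (Fin.cons (ε 0 / 2) (Function.update ε 0 (ε 0 / 2))) =
      mix p r ε := by
  funext j
  simp only [mix, Fin.sum_univ_succ (n := n + 1), Fin.cons_zero, Fin.cons_succ]
  simp only [Fin.sum_univ_succ (n := n), Function.update_self,
    Function.update_of_ne (Fin.succ_ne_zero _)]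
  ring

lemma StableAgainst.of_succ {k n : ℕ} {U : Fin k → Fin k → ℝ} {p : Fin k → ℝ}
    (h : StableAgainst U (n + 1) p) : StableAgainst U n p := by
  intro r hr hrp
  cases n with
  | zero => exact ⟨1 / 2, by norm_num, fun _ _ i => i.elim0⟩
  | succ n =>
    obtain ⟨e, he, hstable⟩ :=
      h (Fin.cons (r 0) r) (Fin.cases (hr 0) hr) (Fin.cases (hrp 0) hrp)
    refine ⟨e, he, fun ε hε i => ?_⟩
    have hε' : ∀ i, (Fin.cons (ε 0 / 2) (Function.update ε 0 (ε 0 / 2)) : Fin (n + 2) → ℝ) i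
        ∈ Set.Ioc 0 e := by
      have half_mem : ε 0 / 2 ∈ Set.Ioc 0 e :=
        ⟨half_pos (hε 0).1, by linarith [(hε 0).1, (hε 0).2]⟩
      refine Fin.cases half_mem fun j => ?_
      rcases eq_or_ne j 0 with rfl | hj
      · simpa using half_mem
      · simpa [Function.update_of_ne hj] using hε j
    have := hstable _ hε' i.succ
    rwa [mix_cons_self_half, Fin.cons_succ] at this

lemma StableAgainst.mono {k n m : ℕ} {U : Fin k → Fin k → ℝ} {p : Fin k → ℝ} (hnm : n ≤ m)
    (h : StableAgainst U m p) : StableAgainst U n p := by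
  induction m, hnm using Nat.le_induction with
  | base => exact h
  | succ m _ ih => exact ih h.of_succ

def DominatesAlternativeBestReplies {k : ℕ} (U : Fin k → Fin k → ℝ) (p : Fin k → ℝ) : Prop :=
  ∀ r ∈ Δ' k, r ≠ p →
    payoff U r p ≤ payoff U p p ∧
    (payoff U r p = payoff U p p →
      (∀ q ∈ Δ' k, payoff U r q ≤ payoff U p q) ∧ payoff U r r < payoff U p r)

lemma StableAgainst.payoff_le_and_lt_of_eq {k : ℕ} {U : Fin k → Fin k → ℝ} {p r : Fin k → ℝ}
    (h : StableAgainst U 1 p) (hr : r ∈ Δ' k) (hrp : r ≠ p) :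
    payoff U r p ≤ payoff U p p ∧ (payoff U r p = payoff U p p → payoff U r r < payoff U p r) := by
  obtain ⟨e, he, hstable⟩ := h (fun _ => r) (fun _ => hr) (fun _ => hrp)
  have key : ∀ t ∈ Set.Ioc 0 e, 0 < (payoff U p p - payoff U r p) +
      t * ((payoff U p r - payoff U r r) - (payoff U p p - payoff U r p)) := by
    intro t ht
    have := sub_pos.2 (hstable (fun _ => t) (fun _ => ht) 0)
    rw [payoff_sub_payoff_mix] at this
    simp only [Fin.sum_univ_one] at this
    linarith
  have hle := nonneg_of_forall_Ioc_pos_add_mul he.1 key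
  refine ⟨by linarith, fun heq => ?_⟩
  have := key e ⟨he.1, le_rfl⟩
  rw [heq, sub_self, sub_zero, zero_add] at this
  linarith [pos_of_mul_pos_right this he.1.le]

lemma StableAgainst.payoff_le_of_payoff_eq {k : ℕ} {U : Fin k → Fin k → ℝ} {p r q : Fin k → ℝ}
    (h : StableAgainst U 2 p) (hr : r ∈ Δ' k) (hrp : r ≠ p) (hq : q ∈ Δ' k)
    (heq : payoff U r p = payoff U p p) : payoff U r q ≤ payoff U p q := by
  rcases eq_or_ne q p with rfl | hqp
  · exact heq.le
  obtain ⟨e, he, hstable⟩ := h ![r, q] (by simp [Fin.forall_fin_two, hr, hq])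
    (by simp [Fin.forall_fin_two, hrp, hqp])
  -- the first mutant `r` vanishes while the second keeps the share `e`
  have key : ∀ t ∈ Set.Ioc 0 e, 0 < e * (payoff U p q - payoff U r q) +
      t * (payoff U p r - payoff U r r) := by
    intro t ht
    have := sub_pos.2 (hstable ![t, e] (by simp [Fin.forall_fin_two, ht.1, ht.2, he.1]) 0)
    rw [payoff_sub_payoff_mix] at this
    simp only [Fin.sum_univ_two] at this
    simpa [heq, add_comm] using this
  have := nonneg_of_forall_Ioc_pos_add_mul he.1 key
  linarith [nonneg_of_mul_nonneg_right this he.1]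

lemma StableAgainst.dominatesAlternativeBestReplies {k : ℕ} {U : Fin k → Fin k → ℝ}
    {p : Fin k → ℝ} (h : StableAgainst U 2 p) : DominatesAlternativeBestReplies U p := by
  intro r hr hrp
  have ⟨hle, hlt⟩ := (h.mono one_le_two).payoff_le_and_lt_of_eq hr hrp
  exact ⟨hle, fun heq => ⟨fun q hq => h.payoff_le_of_payoff_eq hr hrp hq heq, hlt heq⟩⟩

lemma DominatesAlternativeBestReplies.eventually_payoff_lt {k n : ℕ} {U : Fin k → Fin k → ℝ}
    {p : Fin k → ℝ} (hp : DominatesAlternativeBestReplies U p) {r : Fin n → Fin k → ℝ}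
    (hr : ∀ i, r i ∈ Δ' k) (hrp : ∀ i, r i ≠ p) (i : Fin n) :
    ∀ᶠ e in 𝓝[>] (0 : ℝ), ∀ ε : Fin n → ℝ, (∀ j, ε j ∈ Set.Ioc 0 e) →
      payoff U (r i) (mix p r ε) < payoff U p (mix p r ε) := by
  set c := payoff U p p - payoff U (r i) p
  set d : Fin n → ℝ := fun j => payoff U p (r j) - payoff U (r i) (r j)
  obtain ⟨hle, hdom⟩ := hp (r i) (hr i) (hrp i)
  rcases (sub_nonneg.2 hle).eq_or_lt with hc | hc
  · obtain ⟨hweak, hself⟩ := hdom (by linarith [hc])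
    refine Eventually.of_forall fun e ε hε => sub_pos.1 ?_
    rw [payoff_sub_payoff_mix, ← hc, mul_zero, add_zero]
    exact Finset.sum_pos' (fun j _ => mul_nonneg (hε j).1.le (sub_nonneg.2 (hweak _ (hr j))))
      ⟨i, Finset.mem_univ _, mul_pos (hε i).1 (sub_pos.2 hself)⟩
  · -- for `e < c / (n c + Σ |dⱼ|)` the positive constant term `c` outweighs the rest
    set K := n * c + ∑ j, |d j|
    have hsmall : ∀ᶠ e in 𝓝[>] (0 : ℝ), e * K < c := by
      have : Tendsto (fun e : ℝ => e * K) (𝓝 0) (𝓝 0) := by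
        simpa using (tendsto_id (x := 𝓝 (0 : ℝ))).mul_const K
      exact (this.eventually (gt_mem_nhds hc)).filter_mono nhdsWithin_le_nhds
    filter_upwards [hsmall] with e he ε hε
    have hsum : ∑ j, ε j ≤ n * e := by
      simpa using Finset.sum_le_sum fun j (_ : j ∈ Finset.univ) => (hε j).2
    have hlin : -(e * ∑ j, |d j|) ≤ ∑ j, ε j * d j := by
      rw [Finset.mul_sum, ← Finset.sum_neg_distrib]
      refine Finset.sum_le_sum fun j _ => ?_
      nlinarith [neg_abs_le (d j), abs_nonneg (d j), (hε j).1, (hε j).2]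
    have := payoff_sub_payoff_mix U (r i) p r ε
    nlinarith

lemma DominatesAlternativeBestReplies.stableAgainst {k : ℕ} {U : Fin k → Fin k → ℝ}
    {p : Fin k → ℝ} (hp : DominatesAlternativeBestReplies U p) (n : ℕ) :
    StableAgainst U n p := by
  intro r hr hrp
  obtain ⟨e, hstable, he⟩ :=
    ((eventually_all.2 (hp.eventually_payoff_lt hr hrp)).and (Ioo_mem_nhdsGT one_pos)).exists
  exact ⟨e, he, fun ε hε i => hstable i ε hε⟩

theorem stableAgainst_iff_dominatesAlternativeBestReplies {k n : ℕ} {U : Fin k → Fin k → ℝ}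
    {p : Fin k → ℝ} (hn : 2 ≤ n) :
    StableAgainst U n p ↔ DominatesAlternativeBestReplies U p :=
  ⟨fun h => (h.mono hn).dominatesAlternativeBestReplies, fun h => h.stableAgainst n⟩

theorem stmt_4_general {k : ℕ} (U : Fin k → Fin k → ℝ) (p : Fin k → ℝ)
    (m : ℕ) (hm : 2 < m) :
    StableAgainst U 2 p ↔ StableAgainst U m p := by
  rw [stableAgainst_iff_dominatesAlternativeBestReplies le_rfl,
    stableAgainst_iff_dominatesAlternativeBestReplies hm.le]

theorem stmt_4 {k : ℕ} (U : Fin k → Fin k → ℝ) (p : Fin k → ℝ) (hp : p ∈ Δ' k)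
    (m : ℕ) (hm : 2 < m) :
    StableAgainst U 2 p ↔ StableAgainst U m p :=
  stmt_4_general U p m hm
end
end

section
/- In a 2×2 symmetric game, a pure strategy p is evolutionarily stable against multiple mutations if and only if p is an ESS. -/
open Finset Set

noncomputable section

/-!
A single mutant `r` in proportion `ε` is the same as `m` copies of `r` in proportion `ε / m`
each, so stability against `m` mutations gives the ESS property.
Conversely, with two pure strategies `eᵢ`, `eⱼ` every state lies on the segment from `eᵢ` to
`eⱼ`: several mutations `r¹, …, rᵐ ≠ eᵢ` in proportions `εₐ` produce the same population state
`w = τ eⱼ + (1 - τ) eᵢ` as the single mutation `eⱼ` in proportion `τ = Σₐ εₐ rᵃⱼ`. Once `τ` is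
below the invasion barrier of `eⱼ`, `eᵢ` beats `eⱼ` against `w`, hence by linearity beats every
`rᵃ = rᵃⱼ eⱼ + (1 - rᵃⱼ) eᵢ` with `rᵃⱼ > 0`.
-/

lemma payoff_add_left {k : ℕ} (U : Fin k → Fin k → ℝ) (a b : ℝ) (q s w : Fin k → ℝ) :
    payoff U (fun l => a * q l + b * s l) w = a * payoff U q w + b * payoff U s w := by
  simp only [payoff, Finset.mul_sum, ← Finset.sum_add_distrib]
  exact Finset.sum_congr rfl fun _ _ => Finset.sum_congr rfl fun _ _ => by ring

lemma payoff_lt_of_payoff_lt {k : ℕ} (U : Fin k → Fin k → ℝ) {q s w : Fin k → ℝ} {t : ℝ}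
    (ht : 0 < t) (h : payoff U s w < payoff U q w) :
    payoff U (fun l => t * s l + (1 - t) * q l) w < payoff U q w := by
  rw [payoff_add_left]
  nlinarith

lemma sum_mix {k m : ℕ} {p : Fin k → ℝ} {r : Fin m → Fin k → ℝ} (ε : Fin m → ℝ)
    (hp : ∑ l, p l = 1) (hr : ∀ a, ∑ l, r a l = 1) : ∑ l, mix p r ε l = 1 := by
  simp only [mix, Finset.sum_add_distrib, ← Finset.mul_sum, hp]
  rw [Finset.sum_comm]
  simp only [← Finset.mul_sum, hr, mul_one]
  ring

lemma mix_const {k m : ℕ} (hm : m ≠ 0) (p r : Fin k → ℝ) (ε : ℝ) :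
    mix p (fun _ : Fin m => r) (fun _ => ε / m) = fun l => ε * r l + (1 - ε) * p l := by
  have hm' : (m : ℝ) ≠ 0 := Nat.cast_ne_zero.mpr hm
  funext l
  simp only [mix, Finset.sum_const, Finset.card_univ, Fintype.card_fin, nsmul_eq_mul]
  field_simp

theorem IsESS.of_stableAgainst {k m : ℕ} {U : Fin k → Fin k → ℝ} {p : Fin k → ℝ}
    (hm : m ≠ 0) (hp : p ∈ Δ' k) (h : StableAgainst U m p) : IsESS U p := by
  refine ⟨hp, fun r hr hrp => ?_⟩
  obtain ⟨e, he, hstable⟩ := h (fun _ => r) (fun _ => hr) (fun _ => hrp)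
  refine ⟨e, he, fun ε hε₀ hεe => ?_⟩
  have hm₁ : (1 : ℝ) ≤ m := Nat.one_le_cast.mpr (Nat.one_le_iff_ne_zero.mpr hm)
  have hεm : ε / m ∈ Ioc 0 e :=
    ⟨by positivity, (div_le_self hε₀.le hm₁).trans hεe⟩
  simpa only [mix_const hm] using
    hstable (fun _ => ε / m) (fun _ => hεm) ⟨0, Nat.pos_of_ne_zero hm⟩

lemma pure'_ne_pure' {k : ℕ} {i j : Fin k} (hij : i ≠ j) : pure' i ≠ pure' j := by
  intro h
  simpa [pure', hij] using congrFun h i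

lemma pure'_mem_Δ' {k : ℕ} (i : Fin k) : pure' i ∈ Δ' k :=
  ⟨fun l => by unfold pure'; split_ifs <;> norm_num, by simp [pure']⟩

lemma eq_segment_pure'_of_sum_eq_one {i j : Fin 2} (hij : i ≠ j) {q : Fin 2 → ℝ}
    (hq : ∑ l, q l = 1) : q = fun l => q j * pure' j l + (1 - q j) * pure' i l := by
  have hqi : q i = 1 - q j := by
    fin_cases i <;> fin_cases j <;> simp_all [Fin.sum_univ_two] <;> linarith
  funext l
  obtain rfl | rfl : l = i ∨ l = j := by
    fin_cases i <;> fin_cases j <;> fin_cases l <;> simp_all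
  · simp [pure', hij, hqi]
  · simp [pure', hij.symm]

lemma pos_of_mem_Δ'_of_ne_pure' {i j : Fin 2} (hij : i ≠ j) {r : Fin 2 → ℝ} (hr : r ∈ Δ' 2)
    (hri : r ≠ pure' i) : 0 < r j := by
  refine (hr.1 j).lt_of_ne fun hrj => hri ?_
  rw [eq_segment_pure'_of_sum_eq_one hij hr.2, ← hrj]
  simp

lemma le_one_of_mem_Δ' {k : ℕ} {r : Fin k → ℝ} (hr : r ∈ Δ' k) (j : Fin k) : r j ≤ 1 :=
  hr.2 ▸ Finset.single_le_sum (fun l _ => hr.1 l) (Finset.mem_univ j)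

theorem IsESS.stableAgainst_pure' {m : ℕ} {U : Fin 2 → Fin 2 → ℝ} {i : Fin 2} (hm : m ≠ 0)
    (h : IsESS U (pure' i)) : StableAgainst U m (pure' i) := by
  obtain ⟨j, hji⟩ := exists_ne i
  have hij := hji.symm
  obtain ⟨e, ⟨he₀, he₁⟩, hbarrier⟩ := h.2 (pure' j) (pure'_mem_Δ' j) (pure'_ne_pure' hji)
  intro r hr hri
  have hm₁ : (1 : ℝ) ≤ m := Nat.one_le_cast.mpr (Nat.one_le_iff_ne_zero.mpr hm)
  refine ⟨e / m, ⟨by positivity, (div_le_self he₀.le hm₁).trans_lt he₁⟩, fun ε hε a => ?_⟩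
  have hr_pos : ∀ a, 0 < r a j := fun a => pos_of_mem_Δ'_of_ne_pure' hij (hr a) (hri a)
  set w := mix (pure' i) r ε
  have hw : w = fun l => w j * pure' j l + (1 - w j) * pure' i l :=
    eq_segment_pure'_of_sum_eq_one hij (sum_mix ε (pure'_mem_Δ' i).2 fun a => (hr a).2)
  have hwj : w j = ∑ a, ε a * r a j := by simp [w, mix, pure', hji]
  have hτ₀ : 0 < w j := by
    rw [hwj]
    exact Finset.sum_pos (fun a _ => mul_pos (hε a).1 (hr_pos a))
      ⟨⟨0, Nat.pos_of_ne_zero hm⟩, Finset.mem_univ _⟩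
  have hτe : w j ≤ e :=
    calc w j ≤ ∑ _a : Fin m, e / m := by
          rw [hwj]
          refine Finset.sum_le_sum fun a _ => ?_
          have := mul_le_of_le_one_right (hε a).1.le (le_one_of_mem_Δ' (hr a) j)
          linarith [(hε a).2]
      _ = e := by simp [field]
  have hbeat : payoff U (pure' j) w < payoff U (pure' i) w := by
    have := hbarrier (w j) hτ₀ hτe
    rwa [← hw] at this
  rw [eq_segment_pure'_of_sum_eq_one hij (hr a).2]
  exact payoff_lt_of_payoff_lt U (hr_pos a) hbeat

theorem stmt_13 (U : Fin 2 → Fin 2 → ℝ) (p : Fin 2 → ℝ) (hp : p ∈ Δ' 2)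
    (hpure : ∃ i : Fin 2, p = pure' i) :
    (∀ m : ℕ, 2 ≤ m → StableAgainst U m p) ↔ IsESS U p := by
  obtain ⟨i, rfl⟩ := hpure
  exact ⟨fun h => IsESS.of_stableAgainst two_ne_zero hp (h 2 le_rfl),
    fun h m hm => h.stableAgainst_pure' (by omega)⟩
end
end
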